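/- arXiv:2505.24495 — 2 statements merged into one kernel-verified Lean document; each statement's English description precedes it below -/
import Mathlib

section
/- Let γ = 1/10 and define F : 𝔻 → ℂ by F(λ) = (1-|λ|²)^γ (1 - \bar{λ})(1 - λ²). Then the range of F is not a convex subset of ℂ. -/
/-!
Since `(1 - conj λ)(1 - λ²) = |1 - λ|² (1 + λ)`, we have `F(λ) = w(λ) (1 + λ)` with a weight
`w > 0` on the disc. Hence `F(conj λ) = conj F(λ)`, and `F(λ)` is real only for real `λ`,
where `F(x) ≤ (1 - x)²(1 + x) ≤ 32/27`. A convex set containing `F(λ)` and `conj F(λ)`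
contains their midpoint `Re F(λ)`, but `Re F(-1/10 + i/2) > 32/27`.
-/

open Complex ComplexConjugate Metric

lemma Convex.ofReal_re_mem {S : Set ℂ} (hS : Convex ℝ S) {z : ℂ} (hz : z ∈ S)
    (hz' : conj z ∈ S) : (z.re : ℂ) ∈ S := by
  have hhalf : (0 : ℝ) ≤ 1 / 2 := by norm_num
  convert hS hz hz' hhalf hhalf (by norm_num) using 1
  rw [re_eq_add_conj, real_smul, real_smul]
  push_cast
  ring

lemma sq_one_sub_mul_one_add_le {x : ℝ} (hx : x ≤ 5 / 3) :
    (1 - x) ^ 2 * (1 + x) ≤ 32 / 27 := by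
  nlinarith [mul_nonneg (sq_nonneg (3 * x + 1)) (sub_nonneg.mpr hx)]

noncomputable def berezinF (γ : ℝ) (l : ℂ) : ℂ :=
  (((1 - ‖l‖ ^ 2) ^ γ : ℝ) : ℂ) * (1 - conj l) * (1 - l ^ 2)

noncomputable def berezinWeight (γ : ℝ) (l : ℂ) : ℝ :=
  (1 - ‖l‖ ^ 2) ^ γ * normSq (1 - l)

section

variable (γ : ℝ)

lemma berezinF_eq_weight_mul (l : ℂ) : berezinF γ l = berezinWeight γ l * (1 + l) := by
  have hnormSq : (normSq (1 - l) : ℂ) = (1 - conj l) * (1 - l) := by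
    rw [normSq_eq_conj_mul_self, map_sub, map_one]
  rw [berezinF, berezinWeight, ofReal_mul, hnormSq]
  ring

lemma berezinWeight_conj (l : ℂ) : berezinWeight γ (conj l) = berezinWeight γ l := by
  rw [berezinWeight, berezinWeight, norm_conj, ← normSq_conj (1 - l), map_sub conj, map_one]

lemma berezinF_conj (l : ℂ) : berezinF γ (conj l) = conj (berezinF γ l) := by
  rw [berezinF_eq_weight_mul, berezinF_eq_weight_mul, berezinWeight_conj, map_mul, conj_ofReal,
    map_add, map_one]

lemma berezinWeight_pos {l : ℂ} (hl : l ∈ ball (0 : ℂ) 1) : 0 < berezinWeight γ l := by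
  rw [mem_ball_zero_iff] at hl
  have hl1 : 1 - l ≠ 0 := fun h => by
    rw [← sub_eq_zero.mp h, norm_one] at hl
    exact lt_irrefl _ hl
  exact mul_pos (Real.rpow_pos_of_pos (by nlinarith [norm_nonneg l]) _) (normSq_pos.mpr hl1)

lemma im_berezinF (l : ℂ) : (berezinF γ l).im = berezinWeight γ l * l.im := by
  simp [berezinF_eq_weight_mul]

lemma berezinF_ofReal (x : ℝ) :
    berezinF γ x = (((1 - x ^ 2) ^ γ * (1 - x) ^ 2 * (1 + x) : ℝ) : ℂ) := by
  rw [berezinF_eq_weight_mul, berezinWeight, norm_real, Real.norm_eq_abs, sq_abs,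
    ← ofReal_one, ← ofReal_sub, normSq_ofReal]
  push_cast
  ring

end

lemma re_berezinF_le_of_im_eq_zero {γ : ℝ} (hγ : 0 ≤ γ) {l : ℂ} (hl : l ∈ ball (0 : ℂ) 1)
    (him : (berezinF γ l).im = 0) : (berezinF γ l).re ≤ 32 / 27 := by
  have hl_real : l = (l.re : ℂ) := by
    rw [im_berezinF, mul_eq_zero] at him
    exact ext (ofReal_re _).symm
      (by rw [ofReal_im]; exact him.resolve_left (berezinWeight_pos γ hl).ne')
  rw [mem_ball_zero_iff, hl_real, norm_real, Real.norm_eq_abs, abs_lt] at hl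
  have hsq : 0 ≤ 1 - l.re ^ 2 := by nlinarith
  rw [hl_real, berezinF_ofReal, ofReal_re, mul_assoc]
  calc (1 - l.re ^ 2) ^ γ * ((1 - l.re) ^ 2 * (1 + l.re))
      ≤ 1 * ((1 - l.re) ^ 2 * (1 + l.re)) := by
        gcongr
        · exact mul_nonneg (sq_nonneg _) (by linarith)
        · exact Real.rpow_le_one hsq (by linarith [sq_nonneg l.re]) hγ
    _ ≤ 32 / 27 := by rw [one_mul]; exact sq_one_sub_mul_one_add_le (by linarith)

lemma lt_re_berezinF_witness : 32 / 27 < (berezinF (1 / 10) ⟨-1 / 10, 1 / 2⟩).re := by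
  have hweight :
      berezinWeight (1 / 10) ⟨-1 / 10, 1 / 2⟩ = (37 / 50) ^ ((1 : ℝ) / 10) * (73 / 50) := by
    have hsub : (1 : ℂ) - ⟨-1 / 10, 1 / 2⟩ = ⟨11 / 10, -1 / 2⟩ := ext (by norm_num) (by norm_num)
    rw [berezinWeight, ← normSq_eq_norm_sq, normSq_mk, hsub, normSq_mk]
    norm_num
  have hroot : (91 / 100 : ℝ) ≤ (37 / 50) ^ ((1 : ℝ) / 10) := by
    rw [one_div, Real.le_rpow_inv_iff_of_pos (by norm_num) (by norm_num) (by norm_num),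
      show (10 : ℝ) = (10 : ℕ) by norm_num, Real.rpow_natCast]
    norm_num
  rw [berezinF_eq_weight_mul, hweight, re_ofReal_mul]
  norm_num
  nlinarith

theorem stmt_11 :
    ¬ Convex ℝ
      ((fun l : ℂ =>
          (((1 - ‖l‖ ^ 2) ^ ((1:ℝ)/10) : ℝ) : ℂ) *
            (1 - (starRingEnd ℂ) l) * (1 - l ^ 2)) ''
        Metric.ball (0:ℂ) 1) := by
  change ¬ Convex ℝ (berezinF (1 / 10) '' ball 0 1)
  intro hconv
  set l₀ : ℂ := ⟨-1 / 10, 1 / 2⟩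
  have hl₀ : l₀ ∈ ball (0 : ℂ) 1 := by
    rw [mem_ball_zero_iff, ← sq_lt_one_iff₀ (norm_nonneg _), ← normSq_eq_norm_sq, normSq_mk]
    norm_num
  have hconj_mem : conj (berezinF (1 / 10) l₀) ∈ berezinF (1 / 10) '' ball 0 1 :=
    ⟨conj l₀, by rwa [mem_ball_zero_iff, norm_conj, ← mem_ball_zero_iff], berezinF_conj _ _⟩
  obtain ⟨μ, hμ, hμ_eq⟩ := hconv.ofReal_re_mem (Set.mem_image_of_mem _ hl₀) hconj_mem
  have hμ_le :=
    re_berezinF_le_of_im_eq_zero (γ := 1 / 10) (by norm_num) hμ (by rw [hμ_eq, ofReal_im])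
  rw [hμ_eq, ofReal_re] at hμ_le
  exact absurd hμ_le (not_le.mpr lt_re_berezinF_witness)
end

section
/- Let γ > 0 and m, n ∈ ℕ with m ≠ n, m, n ≥ 1. Then the set { (1-|λ|²)^γ \bar{λ}^m λ^n : λ in the open unit disc } equals the closed disc centered at the origin of radius (2γ/(m+n+2γ))^γ · ((m+n)/(m+n+2γ))^((m+n)/2), and in particular is convex in ℂ. -/
open Real Complex Metric Set

/-!
Writing `l = √t e^{iθ}`, the modulus of the Berezin transform is `(1 - t)^γ t^((m+n)/2)`. By
weighted AM-GM this is at most its value at `t = (m+n)/(m+n+2γ)`, and by the intermediate value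
theorem it takes every value in between for `t ∈ [0, 1)`. Rotating `l` by `e^{iθ}` rotates the
value by `e^{i(n-m)θ}`, which sweeps out the whole circle because `m ≠ n`; so the range is the
full closed disc.
-/

theorem one_sub_rpow_mul_rpow_le {a b t : ℝ} (ha : 0 < a) (hb : 0 < b) (ht₀ : 0 ≤ t)
    (ht₁ : t ≤ 1) : (1 - t) ^ a * t ^ b ≤ (a / (a + b)) ^ a * (b / (a + b)) ^ b := by
  have hab : 0 < a + b := by positivity
  set p := a / (a + b)
  set q := b / (a + b)
  have hp : 0 < p := by positivity
  have hq : 0 < q := by positivity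
  have hx : 0 ≤ (1 - t) / p := div_nonneg (by linarith) hp.le
  have hy : 0 ≤ t / q := div_nonneg ht₀ hq.le
  -- weighted AM-GM with weights `p, q`; the arithmetic mean `p * ((1-t)/p) + q * (t/q)` is `1`
  have hamgm : ((1 - t) / p) ^ p * (t / q) ^ q ≤ 1 := by
    have h := geom_mean_le_arith_mean2_weighted hp.le hq.le hx hy
      (by rw [← add_div, div_self hab.ne'])
    rwa [mul_div_cancel₀ _ hp.ne', mul_div_cancel₀ _ hq.ne', sub_add_cancel] at h
  have hpow : ((1 - t) / p) ^ a * (t / q) ^ b ≤ 1 := by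
    have h := rpow_le_one (by positivity) hamgm hab.le
    rwa [mul_rpow (by positivity) (by positivity), ← rpow_mul hx, ← rpow_mul hy,
      div_mul_cancel₀ _ hab.ne', div_mul_cancel₀ _ hab.ne'] at h
  rw [div_rpow (by linarith) hp.le, div_rpow ht₀ hq.le, div_mul_div_comm,
    div_le_one (by positivity)] at hpow
  exact hpow

theorem image_Ico_one_sub_rpow_mul_rpow {a b : ℝ} (ha : 0 < a) (hb : 0 < b) :
    (fun t : ℝ => (1 - t) ^ a * t ^ b) '' Ico 0 1 =
      Icc 0 ((a / (a + b)) ^ a * (b / (a + b)) ^ b) := by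
  refine Subset.antisymm ?_ ?_
  · rintro _ ⟨t, ⟨ht₀, ht₁⟩, rfl⟩
    exact ⟨by have := sub_nonneg.2 ht₁.le; positivity,
      one_sub_rpow_mul_rpow_le ha hb ht₀ ht₁.le⟩
  · set t₀ := b / (a + b)
    have hab : 0 < a + b := by positivity
    have ht₀ : t₀ < 1 := (div_lt_one hab).2 (by linarith)
    have hcont : ContinuousOn (fun t : ℝ => (1 - t) ^ a * t ^ b) (Icc 0 t₀) :=
      ((continuous_const.sub continuous_id).rpow_const fun _ => Or.inr ha.le).mul
        (continuous_id.rpow_const fun _ => Or.inr hb.le) |>.continuousOn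
    have hval₀ : (1 - 0 : ℝ) ^ a * (0 : ℝ) ^ b = 0 := by simp [zero_rpow hb.ne']
    have hvalMax : (1 - t₀) ^ a * t₀ ^ b = (a / (a + b)) ^ a * t₀ ^ b := by
      rw [one_sub_div hab.ne', add_sub_cancel_right]
    have hivt := intermediate_value_Icc (by positivity) hcont
    rw [hval₀, hvalMax] at hivt
    exact hivt.trans (image_mono fun t ht => ⟨ht.1, ht.2.trans_lt ht₀⟩)

theorem sq_rpow_natCast_div_two {r : ℝ} (hr : 0 ≤ r) (k : ℕ) :
    (r ^ 2) ^ ((k : ℝ) / 2) = r ^ k := by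
  rw [← rpow_natCast r 2, ← rpow_mul hr, Nat.cast_ofNat, mul_div_cancel₀ _ two_ne_zero,
    rpow_natCast]

/-- The Berezin transform, at `l`, of the rank-one operator `f ↦ ⟨f, z^m⟩ z^n` on the weighted
Hardy space with kernel `(1 - conj l * z)^(-γ)`. -/
noncomputable def berezinRankOne (γ : ℝ) (m n : ℕ) (l : ℂ) : ℂ :=
  (((1 - ‖l‖ ^ 2) ^ γ : ℝ) : ℂ) * (starRingEnd ℂ l) ^ m * l ^ n

section berezinRankOne

variable {γ : ℝ} {m n : ℕ}

theorem norm_berezinRankOne {l : ℂ} (hl : ‖l‖ ≤ 1) :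
    ‖berezinRankOne γ m n l‖ = (1 - ‖l‖ ^ 2) ^ γ * (‖l‖ ^ 2) ^ (((m : ℝ) + n) / 2) := by
  have h : 0 ≤ 1 - ‖l‖ ^ 2 := by nlinarith [norm_nonneg l]
  rw [berezinRankOne, norm_mul, norm_mul, norm_pow, norm_pow, Complex.norm_conj, norm_real,
    norm_of_nonneg (rpow_nonneg h γ), mul_assoc, ← pow_add, ← Nat.cast_add,
    sq_rpow_natCast_div_two (norm_nonneg l)]

theorem berezinRankOne_ofReal {r : ℝ} (hr : 0 ≤ r) :
    berezinRankOne γ m n r = (((1 - r ^ 2) ^ γ * (r ^ 2) ^ (((m : ℝ) + n) / 2) : ℝ) : ℂ) := by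
  rw [berezinRankOne, conj_ofReal, norm_real, norm_of_nonneg hr, mul_assoc, ← pow_add,
    ← Nat.cast_add, sq_rpow_natCast_div_two hr]
  push_cast
  ring

theorem berezinRankOne_exp_mul (θ : ℝ) (l : ℂ) :
    berezinRankOne γ m n (exp (θ * I) * l) =
      exp ((((n : ℝ) - m) * θ : ℝ) * I) * berezinRankOne γ m n l := by
  have hconj : starRingEnd ℂ (exp (θ * I)) = exp (-(θ * I)) := by
    rw [← exp_conj, map_mul, conj_ofReal, conj_I, mul_neg]
  simp only [berezinRankOne, norm_mul, norm_exp_ofReal_mul_I, one_mul, map_mul, hconj, mul_pow,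
    ← Complex.exp_nat_mul]
  rw [show ((((n : ℝ) - m) * θ : ℝ) : ℂ) * I = (m : ℂ) * -(θ * I) + (n : ℂ) * (θ * I) by
    push_cast; ring, Complex.exp_add]
  ring

theorem image_berezinRankOne_ball (hγ : 0 < γ) (hmn : m ≠ n) :
    berezinRankOne γ m n '' ball 0 1 =
      closedBall 0 ((γ / (γ + ((m : ℝ) + n) / 2)) ^ γ *
        ((((m : ℝ) + n) / 2) / (γ + ((m : ℝ) + n) / 2)) ^ (((m : ℝ) + n) / 2)) := by
  have hb : 0 < ((m : ℝ) + n) / 2 := by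
    have : (0 : ℝ) < m + n := by exact_mod_cast Nat.pos_of_ne_zero (by omega)
    positivity
  have hprofile := image_Ico_one_sub_rpow_mul_rpow hγ hb
  ext w
  rw [mem_closedBall_zero_iff]
  constructor
  · rintro ⟨l, hl, rfl⟩
    rw [mem_ball_zero_iff] at hl
    rw [norm_berezinRankOne hl.le]
    exact (hprofile.subset ⟨_, ⟨sq_nonneg _, pow_lt_one₀ (norm_nonneg _) hl two_ne_zero⟩, rfl⟩).2
  · intro hw
    obtain ⟨t, ⟨ht₀, ht₁⟩, ht : (1 - t) ^ γ * t ^ _ = ‖w‖⟩ :=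
      hprofile.symm.subset ⟨norm_nonneg w, hw⟩
    have hnm : (n : ℝ) - m ≠ 0 := sub_ne_zero.2 (by exact_mod_cast hmn.symm)
    refine ⟨exp ((arg w / (n - m) : ℝ) * I) * (√t : ℝ), ?_, ?_⟩
    · rw [mem_ball_zero_iff, norm_mul, norm_exp_ofReal_mul_I, one_mul, norm_real,
        norm_of_nonneg (sqrt_nonneg t), sqrt_lt' one_pos, one_pow]
      exact ht₁
    · rw [berezinRankOne_exp_mul, berezinRankOne_ofReal (sqrt_nonneg t), sq_sqrt ht₀, ht,
        mul_div_cancel₀ _ hnm, mul_comm, norm_mul_exp_arg_mul_I]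

end berezinRankOne

theorem stmt_12_general (γ : ℝ) (hγ : 0 < γ) (m n : ℕ)
    (hmn : m ≠ n) :
    (fun l : ℂ =>
        (((1 - ‖l‖ ^ 2) ^ γ : ℝ) : ℂ) *
          ((starRingEnd ℂ) l) ^ m * l ^ n) '' Metric.ball (0:ℂ) 1 =
      Metric.closedBall (0:ℂ)
        ((2 * γ / ((m : ℝ) + n + 2 * γ)) ^ γ *
          (((m : ℝ) + n) / ((m : ℝ) + n + 2 * γ)) ^ (((m : ℝ) + n) / 2)) ∧
    Convex ℝ
      ((fun l : ℂ =>
          (((1 - ‖l‖ ^ 2) ^ γ : ℝ) : ℂ) *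
            ((starRingEnd ℂ) l) ^ m * l ^ n) '' Metric.ball (0:ℂ) 1) := by
  have hhalf (x : ℝ) : x / ((m : ℝ) + n + 2 * γ) = x / 2 / (γ + ((m : ℝ) + n) / 2) := by
    rw [div_div, mul_add, mul_div_cancel₀ _ two_ne_zero, add_comm (2 * γ)]
  have himage : berezinRankOne γ m n '' ball 0 1 = closedBall 0 _ :=
    image_berezinRankOne_ball hγ hmn
  rw [hhalf (2 * γ), hhalf ((m : ℝ) + n), mul_div_cancel_left₀ γ two_ne_zero]
  exact ⟨himage, himage ▸ convex_closedBall _ _⟩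

theorem stmt_12 (γ : ℝ) (hγ : 0 < γ) (m n : ℕ) (hm : 1 ≤ m) (hn : 1 ≤ n)
    (hmn : m ≠ n) :
    (fun l : ℂ =>
        (((1 - ‖l‖ ^ 2) ^ γ : ℝ) : ℂ) *
          ((starRingEnd ℂ) l) ^ m * l ^ n) '' Metric.ball (0:ℂ) 1 =
      Metric.closedBall (0:ℂ)
        ((2 * γ / ((m : ℝ) + n + 2 * γ)) ^ γ *
          (((m : ℝ) + n) / ((m : ℝ) + n + 2 * γ)) ^ (((m : ℝ) + n) / 2)) ∧
    Convex ℝ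
      ((fun l : ℂ =>
          (((1 - ‖l‖ ^ 2) ^ γ : ℝ) : ℂ) *
            ((starRingEnd ℂ) l) ^ m * l ^ n) '' Metric.ball (0:ℂ) 1) :=
  stmt_12_general γ hγ m n hmn
end
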